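/- Let n, v : ℝ³ → ℝ³ and Φ : ℝ³ → ℝ be smooth 2π-periodic functions with div v = 0. Then −∫_Q Σ_{i,j,k=1}^{3} n_i n_j (∂_j Φ) v_k (∂_i ∂_k Φ) dx = ∫_Q Σ_{i,j,k=1}^{3} (∂_i Φ)(∂_j Φ) n_j v_k (∂_k n_i) dx. -/

import Mathlib

noncomputable section
open MeasureTheory Real

/-- Vectors in `ℝ³`. -/
abbrev V3 : Type := Fin 3 → ℝ
/-- Real `3 × 3` matrices. -/
abbrev M3 : Type := Matrix (Fin 3) (Fin 3) ℝ

/-- The periodicity cell `Q = [-π, π]³`. -/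
def Q3 : Set V3 := Set.Icc (fun _ => -Real.pi) (fun _ => Real.pi)

/-- Euclidean inner product on `ℝ³`. -/
def dot (a b : V3) : ℝ := ∑ i, a i * b i

/-- Frobenius inner product `A : B = ∑_{i,j} A_{ij} B_{ij}`. -/
def mdot (A B : M3) : ℝ := ∑ i, ∑ j, A i j * B i j

/-- Tensor product `(a ⊗ b)_{ij} = a_i b_j`. -/
def outer (a b : V3) : M3 := Matrix.of fun i j => a i * b j

/-- Matrix-vector product. -/
def mv (A : M3) (x : V3) : V3 := A.mulVec x

/-- Partial derivative `∂_i f` of a scalar field. -/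
def pd (i : Fin 3) (f : V3 → ℝ) (x : V3) : ℝ := fderiv ℝ f x (Pi.single i 1)

/-- Spatial gradient of a scalar field. -/
def grad (f : V3 → ℝ) (x : V3) : V3 := fun i => pd i f x

/-- Divergence of a vector field. -/
def divg (w : V3 → V3) (x : V3) : ℝ := ∑ i, pd i (fun y => w y i) x

/-- Divergence of a matrix field, `(div A)_i = ∑_j ∂_j A_{ij}`. -/
def divM (A : V3 → M3) (x : V3) : V3 := fun i => ∑ j, pd j (fun y => A y i j) x

/-- Laplacian of a scalar field. -/
def lap (f : V3 → ℝ) (x : V3) : ℝ := ∑ i, pd i (fun y => pd i f y) x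

/-- Componentwise Laplacian of a vector field. -/
def lapV (w : V3 → V3) (x : V3) : V3 := fun k => lap (fun y => w y k) x

/-- Gradient matrix `(∇w)_{ij} = ∂_j w_i`. -/
def gradM (w : V3 → V3) (x : V3) : M3 := Matrix.of fun i j => pd j (fun y => w y i) x

/-- Symmetric part `D(v) = ½(∇v + ∇vᵀ)` of the velocity gradient. -/
def Dv (w : V3 → V3) (x : V3) : M3 := (1/2 : ℝ) • (gradM w x + (gradM w x).transpose)

/-- Antisymmetric part `Ω(v) = ½(∇v − ∇vᵀ)` of the velocity gradient. -/
def Ov (w : V3 → V3) (x : V3) : M3 := (1/2 : ℝ) • (gradM w x - (gradM w x).transpose)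

/-- `(∇n ⊙ ∇n)_{ij} = ∑_k ∂_i n_k ∂_j n_k`. -/
def odotM (w : V3 → V3) (x : V3) : M3 :=
  Matrix.of fun i j => ∑ k, pd i (fun y => w y k) x * pd j (fun y => w y k) x

/-- `|∇w|² = ∑_{i,k} (∂_i w_k)²`. -/
def gnorm2 (w : V3 → V3) (x : V3) : ℝ := ∑ i, ∑ k, (pd i (fun y => w y k) x)^2

/-- `2π`-periodicity in the space variables. -/
def Per {α : Type*} (f : V3 → α) : Prop :=
  ∀ (x : V3) (i : Fin 3), f (x + Pi.single i (2 * Real.pi)) = f x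

/-- The dielectric matrix `Id + ε n ⊗ n`. -/
def matA (ε : ℝ) (n : V3) : M3 := 1 + ε • outer n n

/-- The singular configuration potential `F(r) = (1 − r) log(1 − r)`. -/
def Fpot (r : ℝ) : ℝ := (1 - r) * Real.log (1 - r)

/-- Its derivative `F'(r) = −log(1 − r) − 1`. -/
def Fpot' (r : ℝ) : ℝ := -Real.log (1 - r) - 1

/-- The corotational (Lie) derivative `n̊ = ∂_t n + v·∇n − Ω(v) n`. -/
def ringD (v n : V3 → ℝ → V3) (x : V3) (t : ℝ) : V3 :=
  (fun k => deriv (fun s => n x s k) t)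
    + (fun k => dot (v x t) (grad (fun y => n y t k) x))
    - mv (Ov (fun y => v y t) x) (n x t)

-- helper lemmas
lemma contDiff_comp_proj {f : V3 → V3} (hf : ContDiff ℝ (⊤ : ℕ∞) f) (i : Fin 3) :
    ContDiff ℝ (⊤ : ℕ∞) (fun y => f y i) :=
  (ContinuousLinearMap.proj (R := ℝ) (φ := fun _ : Fin 3 => ℝ) i).contDiff.comp hf

lemma contDiff_pd {f : V3 → ℝ} (hf : ContDiff ℝ (⊤ : ℕ∞) f) (i : Fin 3) :
    ContDiff ℝ (⊤ : ℕ∞) (fun y => pd i f y) :=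
  (hf.fderiv_right (by simp)).clm_apply contDiff_const

lemma pd_mul {f g : V3 → ℝ} (i : Fin 3) (x : V3) (hf : DifferentiableAt ℝ f x)
    (hg : DifferentiableAt ℝ g x) :
    pd i (fun y => f y * g y) x = pd i f x * g x + f x * pd i g x := by
  simp only [pd, fderiv_fun_mul hf hg, ContinuousLinearMap.add_apply,
    ContinuousLinearMap.smul_apply, smul_eq_mul]
  ring

lemma pd_sum {ι : Type*} (s : Finset ι) (f : ι → V3 → ℝ) (i : Fin 3) (x : V3)
    (hf : ∀ j ∈ s, DifferentiableAt ℝ (f j) x) :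
    pd i (fun y => ∑ j ∈ s, f j y) x = ∑ j ∈ s, pd i (f j) x := by
  simp only [pd, fderiv_fun_sum hf, ContinuousLinearMap.sum_apply]

lemma pd_comm {f : V3 → ℝ} (hf : ContDiff ℝ (⊤ : ℕ∞) f) (i k : Fin 3) (x : V3) :
    pd i (fun y => pd k f y) x = pd k (fun y => pd i f y) x := by
  have hdiff : DifferentiableAt ℝ (fderiv ℝ f) x :=
    (hf.fderiv_right (m := (⊤ : ℕ∞)) (by simp)).differentiable (by simp) x
  have h1 : ∀ (u w : V3), fderiv ℝ (fun y => fderiv ℝ f y u) x w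
      = fderiv ℝ (fderiv ℝ f) x w u := by
    intro u w
    rw [fderiv_clm_apply hdiff (differentiableAt_const u)]
    simp
  have hsymm : ∀ v w, fderiv ℝ (fderiv ℝ f) x v w = fderiv ℝ (fderiv ℝ f) x w v :=
    (hf.contDiffAt).isSymmSndFDerivAt (by rw [minSmoothness_of_isRCLikeNormedField]; exact WithTop.coe_le_coe.mpr le_top)
  simp only [pd]
  rw [h1, h1, hsymm]

lemma fderiv_shift {α : Type*} [NormedAddCommGroup α] [NormedSpace ℝ α]
    {f : V3 → α} (c : V3) (x : V3) (hf : DifferentiableAt ℝ f (x + c)) :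
    fderiv ℝ (fun y => f (y + c)) x = fderiv ℝ f (x + c) := by
  have h := hf.hasFDerivAt.comp x ((hasFDerivAt_id x).add_const c)
  simpa [Function.comp_def] using h.fderiv

lemma per_pd {f : V3 → ℝ} (hf : ContDiff ℝ (⊤ : ℕ∞) f) (hfp : Per f) (j : Fin 3) :
    Per (fun y => pd j f y) := by
  intro x i
  have hfe : (fun y => f (y + Pi.single i (2 * Real.pi))) = f := by
    funext y; exact hfp y i
  simp only [pd]
  rw [← fderiv_shift (Pi.single i (2 * Real.pi)) x
    ((hf.differentiable (by simp)) _), hfe]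

lemma integral_divg_eq_zero {F : V3 → V3} (hF : ContDiff ℝ (⊤ : ℕ∞) F) (hFp : Per F) :
    ∫ x in Q3, divg F x = 0 := by
  have hle : (fun _ : Fin 3 => -Real.pi) ≤ fun _ => Real.pi :=
    fun _ => by simp only []; have := Real.pi_pos; linarith
  have hdiv_eq : ∀ x : V3, divg F x = ∑ i, fderiv ℝ F x (Pi.single i 1) i := by
    intro x
    refine Finset.sum_congr rfl fun i _ => ?_
    have h := ((ContinuousLinearMap.proj (R := ℝ) (φ := fun _ : Fin 3 => ℝ) i).hasFDerivAt.comp x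
      (hF.differentiable (by simp) x).hasFDerivAt)
    have : fderiv ℝ (fun y => F y i) x
        = (ContinuousLinearMap.proj (R := ℝ) (φ := fun _ : Fin 3 => ℝ) i).comp
          (fderiv ℝ F x) := h.fderiv
    simp only [pd, this]
    rfl
  have hcont : Continuous fun x => ∑ i, fderiv ℝ F x (Pi.single i 1) i := by
    refine continuous_finset_sum _ fun i _ => ?_
    exact (continuous_pi_iff.mp
      ((hF.continuous_fderiv (by simp)).clm_apply continuous_const)) i
  have key := MeasureTheory.integral_divergence_of_hasFDerivAt_off_countable
    (a := fun _ : Fin 3 => -Real.pi) (b := fun _ => Real.pi) hle F (fun x => fderiv ℝ F x) ∅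
    Set.countable_empty hF.continuous.continuousOn
    (fun x _ => (hF.differentiable (by simp) x).hasFDerivAt)
    (hcont.continuousOn.integrableOn_compact isCompact_Icc)
  have hface : ∀ (i : Fin 3) (y : Fin 2 → ℝ),
      F (Fin.insertNth (α := fun _ => ℝ) i Real.pi y) = F (Fin.insertNth (α := fun _ => ℝ) i (-Real.pi) y) := by
    intro i y
    have heq : Fin.insertNth (α := fun _ => ℝ) i (-Real.pi) y + Pi.single i (2 * Real.pi)
        = Fin.insertNth (α := fun _ => ℝ) i Real.pi y := by
      funext j
      refine Fin.succAboveCases i ?_ ?_ j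
      · simp; ring
      · intro m
        simp [Fin.succAbove_ne, Pi.single_eq_of_ne (Fin.succAbove_ne i m)]
    rw [← heq, hFp]
  calc ∫ x in Q3, divg F x
      = ∫ x in Set.Icc (fun _ : Fin 3 => -Real.pi) (fun _ => Real.pi),
          ∑ i, fderiv ℝ F x (Pi.single i 1) i := by
        simp only [Q3]; exact setIntegral_congr_fun measurableSet_Icc fun x _ => hdiv_eq x
    _ = 0 := by
        rw [key]
        refine Finset.sum_eq_zero fun i _ => ?_
        rw [sub_eq_zero]
        refine setIntegral_congr_fun measurableSet_Icc fun y _ => ?_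
        rw [hface]


/-- the cancellation identity used in the energy law. For smooth
`2π`-periodic `n, v, Φ` with `div v = 0`,
`−∫_Q ∑ n_i n_j (∂_j Φ) v_k (∂_i ∂_k Φ) = ∫_Q ∑ (∂_i Φ)(∂_j Φ) n_j v_k (∂_k n_i)`. -/
theorem stmt6 (n v : V3 → V3) (Φ : V3 → ℝ)
    (hn : ContDiff ℝ (⊤ : ℕ∞) n) (hv : ContDiff ℝ (⊤ : ℕ∞) v) (hΦ : ContDiff ℝ (⊤ : ℕ∞) Φ)
    (hnp : Per n) (hvp : Per v) (hΦp : Per Φ)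
    (hdiv : ∀ x, divg v x = 0) :
    -∫ x in Q3, ∑ i, ∑ j, ∑ k,
        n x i * n x j * pd j Φ x * v x k * pd i (fun y => pd k Φ y) x
      = ∫ x in Q3, ∑ i, ∑ j, ∑ k,
          pd i Φ x * pd j Φ x * n x j * v x k * pd k (fun y => n y i) x := by
  classical
  -- component smoothness
  have hni : ∀ i, ContDiff ℝ (⊤ : ℕ∞) (fun y => n y i) := contDiff_comp_proj hn
  have hvi : ∀ i, ContDiff ℝ (⊤ : ℕ∞) (fun y => v y i) := contDiff_comp_proj hv
  have hΦ1 : ∀ j, ContDiff ℝ (⊤ : ℕ∞) (fun y => pd j Φ y) := contDiff_pd hΦ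
  have hΦ2 : ∀ k i, ContDiff ℝ (⊤ : ℕ∞) (fun y => pd i (fun z => pd k Φ z) y) :=
    fun k i => contDiff_pd (hΦ1 k) i
  have hn1 : ∀ i k, ContDiff ℝ (⊤ : ℕ∞) (fun y => pd k (fun z => n z i) y) :=
    fun i k => contDiff_pd (hni i) k
  have dn : ∀ i x, DifferentiableAt ℝ (fun y => n y i) x :=
    fun i x => ((hni i).differentiable (by simp)) x
  have dv : ∀ i x, DifferentiableAt ℝ (fun y => v y i) x :=
    fun i x => ((hvi i).differentiable (by simp)) x
  have dΦ1 : ∀ j x, DifferentiableAt ℝ (fun y => pd j Φ y) x :=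
    fun j x => ((hΦ1 j).differentiable (by simp)) x
  -- the vector field and its pieces
  set S : V3 → ℝ := fun y => ∑ i, ∑ j, n y i * n y j * pd j Φ y * pd i Φ y with hSdef
  set F : V3 → V3 := fun y k => S y * v y k with hFdef
  have hScd : ContDiff ℝ (⊤ : ℕ∞) S := by
    refine ContDiff.sum fun i _ => ContDiff.sum fun j _ => ?_
    exact (((hni i).mul (hni j)).mul (hΦ1 j)).mul (hΦ1 i)
  have dS : ∀ x, DifferentiableAt ℝ S x := fun x => (hScd.differentiable (by simp)) x
  have hFcd : ContDiff ℝ (⊤ : ℕ∞) F := contDiff_pi.mpr fun k => hScd.mul (hvi k)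
  have hpdper : ∀ (b : Fin 3) (x : V3) (i : Fin 3),
      pd b Φ (x + Pi.single i (2 * Real.pi)) = pd b Φ x :=
    fun b x i => per_pd hΦ hΦp b x i
  have hFper : Per F := by
    intro x i
    funext k
    have hvx : v (x + Pi.single i (2 * Real.pi)) = v x := hvp x i
    have hnx : n (x + Pi.single i (2 * Real.pi)) = n x := hnp x i
    simp only [hFdef, hSdef, hvx, hnx, hpdper]
  have hint0 : ∫ x in Q3, divg F x = 0 := integral_divg_eq_zero hFcd hFper
  -- abbreviations for the two integrands
  set A : V3 → ℝ := fun x => ∑ i, ∑ j, ∑ k,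
      n x i * n x j * pd j Φ x * v x k * pd i (fun y => pd k Φ y) x with hAdef
  set B : V3 → ℝ := fun x => ∑ i, ∑ j, ∑ k,
      pd i Φ x * pd j Φ x * n x j * v x k * pd k (fun y => n y i) x with hBdef
  -- pointwise divergence identity
  have key : ∀ x, divg F x = 2 * (A x + B x) := by
    intro x
    -- step 1 : divg F x = ∑ k, pd k S x * v x k
    have hdF : divg F x = ∑ k, pd k S x * v x k := by
      have h1 : ∀ k : Fin 3, pd k (fun y => F y k) x
          = pd k S x * v x k + S x * pd k (fun y => v y k) x := by
        intro k
        have := pd_mul (f := S) (g := fun y => v y k) k x (dS x) (dv k x)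
        simpa [hFdef] using this
      calc divg F x = ∑ k, (pd k S x * v x k + S x * pd k (fun y => v y k) x) :=
            Finset.sum_congr rfl fun k _ => h1 k
        _ = (∑ k, pd k S x * v x k) + S x * ∑ k, pd k (fun y => v y k) x := by
            rw [Finset.sum_add_distrib, Finset.mul_sum]
        _ = ∑ k, pd k S x * v x k := by
            have : (∑ k, pd k (fun y => v y k) x) = divg v x := rfl
            rw [this, hdiv x]; ring
    -- step 2 : expansion of pd k S x
    have hpdS : ∀ k, pd k S x = ∑ i, ∑ j,
        (pd k (fun y => n y i) x * n x j * pd j Φ x * pd i Φ x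
          + n x i * pd k (fun y => n y j) x * pd j Φ x * pd i Φ x
          + n x i * n x j * pd k (fun y => pd j Φ y) x * pd i Φ x
          + n x i * n x j * pd j Φ x * pd k (fun y => pd i Φ y) x) := by
      intro k
      have hd2 : ∀ i j : Fin 3,
          DifferentiableAt ℝ (fun y => n y i * n y j * pd j Φ y * pd i Φ y) x :=
        fun i j => (((dn i x).mul (dn j x)).mul (dΦ1 j x)).mul (dΦ1 i x)
      have e1 : pd k S x = ∑ i, pd k (fun y => ∑ j, n y i * n y j * pd j Φ y * pd i Φ y) x := by
        rw [hSdef]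
        exact pd_sum Finset.univ _ k x fun i _ =>
          DifferentiableAt.fun_sum fun j _ => hd2 i j
      rw [e1]
      refine Finset.sum_congr rfl fun i _ => ?_
      rw [pd_sum Finset.univ _ k x fun j _ => hd2 i j]
      refine Finset.sum_congr rfl fun j _ => ?_
      rw [pd_mul k x (((dn i x).fun_mul (dn j x)).fun_mul (dΦ1 j x)) (dΦ1 i x),
        pd_mul k x ((dn i x).fun_mul (dn j x)) (dΦ1 j x),
        pd_mul k x (dn i x) (dn j x)]
      ring
    -- step 3 : assemble
    have swap : ∀ h : Fin 3 → Fin 3 → Fin 3 → ℝ,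
        (∑ k, ∑ i, ∑ j, h k i j) = ∑ k, ∑ i, ∑ j, h k j i :=
      fun h => Finset.sum_congr rfl fun k _ => Finset.sum_comm
    have reord : ∀ h : Fin 3 → Fin 3 → Fin 3 → ℝ,
        (∑ i, ∑ j, ∑ k, h i j k) = ∑ k, ∑ i, ∑ j, h i j k := by
      intro h
      rw [show (∑ i, ∑ j, ∑ k, h i j k) = ∑ i, ∑ k, ∑ j, h i j k from
        Finset.sum_congr rfl fun i _ => Finset.sum_comm]
      exact Finset.sum_comm
    have hAeq : A x = ∑ k, ∑ i, ∑ j,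
        n x i * n x j * pd j Φ x * v x k * pd i (fun y => pd k Φ y) x := by
      rw [hAdef]; exact reord _
    have hBeq : B x = ∑ k, ∑ i, ∑ j,
        pd i Φ x * pd j Φ x * n x j * v x k * pd k (fun y => n y i) x := by
      rw [hBdef]; exact reord _
    have hcomm : ∀ i k : Fin 3, pd k (fun y => pd i Φ y) x = pd i (fun y => pd k Φ y) x :=
      fun i k => pd_comm hΦ k i x
    calc divg F x = ∑ k, pd k S x * v x k := hdF
      _ = ∑ k, ∑ i, ∑ j,
          ((pd k (fun y => n y i) x * n x j * pd j Φ x * pd i Φ x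
            + n x i * n x j * pd j Φ x * pd k (fun y => pd i Φ y) x) * v x k
          + (n x i * pd k (fun y => n y j) x * pd j Φ x * pd i Φ x
            + n x i * n x j * pd k (fun y => pd j Φ y) x * pd i Φ x) * v x k) := by
          refine Finset.sum_congr rfl fun k _ => ?_
          rw [hpdS k, Finset.sum_mul]
          refine Finset.sum_congr rfl fun i _ => ?_
          rw [Finset.sum_mul]
          refine Finset.sum_congr rfl fun j _ => ?_
          ring
      _ = (∑ k, ∑ i, ∑ j, (pd k (fun y => n y i) x * n x j * pd j Φ x * pd i Φ x
            + n x i * n x j * pd j Φ x * pd k (fun y => pd i Φ y) x) * v x k)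
          + ∑ k, ∑ i, ∑ j, (n x i * pd k (fun y => n y j) x * pd j Φ x * pd i Φ x
            + n x i * n x j * pd k (fun y => pd j Φ y) x * pd i Φ x) * v x k := by
          simp [Finset.sum_add_distrib]
      _ = 2 * (A x + B x) := by
          rw [swap (fun k i j => (n x i * pd k (fun y => n y j) x * pd j Φ x * pd i Φ x
            + n x i * n x j * pd k (fun y => pd j Φ y) x * pd i Φ x) * v x k)]
          rw [hAeq, hBeq]
          rw [show (2 : ℝ) * ((∑ k, ∑ i, ∑ j,
              n x i * n x j * pd j Φ x * v x k * pd i (fun y => pd k Φ y) x)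
            + ∑ k, ∑ i, ∑ j,
              pd i Φ x * pd j Φ x * n x j * v x k * pd k (fun y => n y i) x)
            = (∑ k, ∑ i, ∑ j,
              (n x i * n x j * pd j Φ x * v x k * pd i (fun y => pd k Φ y) x
               + pd i Φ x * pd j Φ x * n x j * v x k * pd k (fun y => n y i) x))
            + (∑ k, ∑ i, ∑ j,
              (n x i * n x j * pd j Φ x * v x k * pd i (fun y => pd k Φ y) x
               + pd i Φ x * pd j Φ x * n x j * v x k * pd k (fun y => n y i) x)) from by
            simp [Finset.sum_add_distrib]; ring]
          congr 1
          · refine Finset.sum_congr rfl fun k _ => Finset.sum_congr rfl fun i _ =>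
              Finset.sum_congr rfl fun j _ => ?_
            rw [hcomm i k]; ring
          · refine Finset.sum_congr rfl fun k _ => Finset.sum_congr rfl fun i _ =>
              Finset.sum_congr rfl fun j _ => ?_
            rw [hcomm i k]; ring
  -- integrability
  have hAc : Continuous A := by
    refine continuous_finset_sum _ fun i _ => continuous_finset_sum _ fun j _ =>
      continuous_finset_sum _ fun k _ => ?_
    exact (((((hni i).continuous.mul (hni j).continuous).mul (hΦ1 j).continuous).mul
      (hvi k).continuous).mul (hΦ2 k i).continuous)
  have hBc : Continuous B := by
    refine continuous_finset_sum _ fun i _ => continuous_finset_sum _ fun j _ =>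
      continuous_finset_sum _ fun k _ => ?_
    exact (((((hΦ1 i).continuous.mul (hΦ1 j).continuous).mul (hni j).continuous).mul
      (hvi k).continuous).mul (hn1 i k).continuous)
  have hAint : IntegrableOn A Q3 := by
    have : IsCompact Q3 := isCompact_Icc
    exact hAc.continuousOn.integrableOn_compact this
  have hBint : IntegrableOn B Q3 := by
    have : IsCompact Q3 := isCompact_Icc
    exact hBc.continuousOn.integrableOn_compact this
  have hsplit : ∫ x in Q3, divg F x = 2 * ((∫ x in Q3, A x) + ∫ x in Q3, B x) := by
    calc ∫ x in Q3, divg F x = ∫ x in Q3, 2 * (A x + B x) :=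
          setIntegral_congr_fun measurableSet_Icc fun x _ => key x
      _ = 2 * ∫ x in Q3, (A x + B x) := by
          simpa [smul_eq_mul] using
            integral_smul (μ := volume.restrict Q3) (2 : ℝ) (fun x => A x + B x)
      _ = 2 * ((∫ x in Q3, A x) + ∫ x in Q3, B x) := by
          rw [integral_add hAint hBint]
  rw [hint0] at hsplit
  have h2 : (∫ x in Q3, A x) + ∫ x in Q3, B x = 0 := by linarith
  show -∫ x in Q3, A x = ∫ x in Q3, B x
  linarith
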